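/- arXiv:1701.02414 — 4 statements merged into one kernel-verified Lean document; each statement's English description precedes it below -/
import Mathlib

section
/- Let V ≥ 1. For any (infinite) sequence (u_k)_{k≥1} of points from U there exists a sequence (e_k)_{k≥1} of points from E such that ‖Σ_{i=1}^k (u_i − e_i)‖₂ is uniformly bounded over all k = 1, 2, …; in particular one can achieve ‖Σ_{i=1}^k (u_i − e_i)‖₂ ≤ √V · (1 + 2V) for all k, with ‖Σ_{i=1}^k (u_i − e_i)‖₂ ≤ √V whenever k is a multiple of V. -/
/-!
Read `A j k = ∑_{i ≤ k} u i j` as the demand for coordinate `j` up to time `k`; choosing the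
basis vector `v_j` at step `k` serves one unit of it. Schedule earliest deadline first: among the
coordinates whose tally does not exceed their current demand, serve one whose demand first
exceeds its tally plus one at the earliest time. Eligibility keeps each tally at most one unit
above demand. If some coordinate were more than one unit behind at time `T`, let `b ≤ T` be the
last time at which every coordinate is either ahead of demand or safe until `T` (time `0` is
such a time; a serve that overshoots the demand at `T` creates a new one, because every other
eligible coordinate then has a later deadline). Every unit served in `(b, T]` goes to a
coordinate that is still short at `T`, so over `(b, T]` no coordinate is served more than its
demand grows and the lagging one strictly less, although both totals are `T - b`. Hence every
coordinate of `∑ (u i - e i)` lies in `[-1, 1]`, and the Euclidean norm is at most `√V` for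
every `k`.
-/

open Finset

/-- `E`: the set of standard basis vectors of `ℝ^V`.  Note that for `x : Fin V → ℝ`
the ambient norm `‖x‖` is the sup norm `‖x‖_∞`. -/
def stdBasisSet (V : ℕ) : Set (Fin V → ℝ) := Set.range fun j => (Pi.single j 1 : Fin V → ℝ)

noncomputable def euclNorm {V : ℕ} (x : Fin V → ℝ) : ℝ := Real.sqrt (∑ j, x j ^ 2)

noncomputable section

namespace EDF

variable {ι : Type*} (A : ι → ℕ → ℝ)

def deadline (j : ι) (n : ℝ) : ℕ∞ := ⨅ (m : ℕ) (_ : n + 1 < A j m), (m : ℕ∞)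

theorem lt_deadline_iff {j : ι} {n : ℝ} {k : ℕ} :
    (k : ℕ∞) < deadline A j n ↔ ∀ m ≤ k, A j m ≤ n + 1 := by
  constructor
  · intro h m hm
    by_contra! hlt
    exact ((iInf₂_le m hlt).trans (Nat.cast_le.2 hm)).not_gt h
  · intro h
    rw [← ENat.add_one_le_iff (ENat.natCast_ne_top k)]
    refine le_iInf₂ fun m hm => ?_
    have hkm : k < m := by
      by_contra! hmk
      exact (h m hmk).not_gt hm
    exact_mod_cast hkm

def IsEDFChoice (k : ℕ) (N : ι → ℝ) (j : ι) : Prop :=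
  N j ≤ A j k ∧ ∀ i, N i ≤ A i k → deadline A j (N j) ≤ deadline A i (N i)

theorem exists_isEDFChoice [Fintype ι] {k : ℕ} {N : ι → ℝ} (h : ∃ j, N j ≤ A j k) :
    ∃ j, IsEDFChoice A k N j := by
  obtain ⟨j, hj⟩ := h
  obtain ⟨i, hi, hmin⟩ := exists_min_image {j | N j ≤ A j k} (fun j => deadline A j (N j))
    ⟨j, by simpa using hj⟩
  exact ⟨i, (mem_filter.1 hi).2, fun l hl => hmin l (by simpa using hl)⟩

variable [DecidableEq ι]

def tally (p : ℕ → ι) (k : ℕ) : ι → ℝ := ∑ i ∈ Icc 1 k, Pi.single (p i) 1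

section Tally

variable (p : ℕ → ι)

@[simp] theorem tally_zero : tally p 0 = 0 := by simp [tally]

theorem tally_succ (k : ℕ) : tally p (k + 1) = tally p k + Pi.single (p (k + 1)) 1 :=
  sum_Icc_succ_top (by omega) _

theorem tally_succ_self (k : ℕ) : tally p (k + 1) (p (k + 1)) = tally p k (p (k + 1)) + 1 := by
  simp [tally_succ]

theorem tally_succ_of_ne {k : ℕ} {j : ι} (h : j ≠ p (k + 1)) :
    tally p (k + 1) j = tally p k j := by
  simp [tally_succ, h]

theorem monotone_tally (j : ι) : Monotone fun k => tally p k j :=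
  monotone_nat_of_le_succ fun k => by
    rw [tally_succ, Pi.add_apply]
    exact le_add_of_nonneg_right
      ((Pi.single_nonneg.2 zero_le_one : (0 : ι → ℝ) ≤ Pi.single (p (k + 1)) 1) j)

theorem sum_tally [Fintype ι] (k : ℕ) : ∑ j, tally p k j = k := by
  simp only [tally, Finset.sum_apply]
  rw [sum_comm]
  simp

theorem exists_last_pick {j : ι} {b c : ℕ} (hbc : tally p b j < tally p c j) :
    ∃ t, b < t ∧ t ≤ c ∧ p t = j ∧ tally p t j = tally p c j ∧
      tally p b j + 1 ≤ tally p t j := by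
  induction c with
  | zero => exact absurd (monotone_tally p j (Nat.zero_le b)) hbc.not_ge
  | succ c ih =>
    have hbc_le : b ≤ c := Nat.lt_succ_iff.1 ((monotone_tally p j).reflect_lt hbc)
    by_cases hj : j = p (c + 1)
    · subst hj
      refine ⟨c + 1, by omega, le_rfl, rfl, rfl, ?_⟩
      rw [tally_succ_self]
      linarith [monotone_tally p (p (c + 1)) hbc_le]
    · rw [tally_succ_of_ne p hj] at hbc ⊢
      obtain ⟨t, hbt, htc, hpt, hteq, hstep⟩ := ih hbc
      exact ⟨t, hbt, htc.trans c.le_succ, hpt, hteq, hstep⟩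

end Tally

def IsEDFSchedule (p : ℕ → ι) : Prop := ∀ k, IsEDFChoice A (k + 1) (tally p k) (p (k + 1))

def NoBacklog (p : ℕ → ι) (b T : ℕ) : Prop :=
  ∀ j, A j b ≤ tally p b j ∨ A j T ≤ tally p b j + 1

variable {A} {p : ℕ → ι}

theorem noBacklog_zero (hA0 : ∀ j, A j 0 = 0) (T : ℕ) : NoBacklog A p 0 T :=
  fun j => Or.inl (by simp [hA0])

theorem tally_sub_le_of_noBacklog (hmono : ∀ j, Monotone (A j)) {b T : ℕ}
    (hb : NoBacklog A p b T) (hbT : b ≤ T)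
    (hgood : ∀ t, b < t → t ≤ T → tally p t (p t) < A (p t) T) (j : ι) :
    tally p T j - tally p b j ≤ A j T - A j b := by
  have hle : tally p b j ≤ tally p T j := monotone_tally p j hbT
  rcases hle.eq_or_lt with heq | hlt
  · rw [heq, sub_self]
    exact sub_nonneg.2 (hmono j hbT)
  · obtain ⟨t, hbt, htT, rfl, hteq, hstep⟩ := exists_last_pick p hlt
    have := hgood t hbt htT
    rcases hb (p t) with hahead | hsafe <;> linarith

theorem sub_one_le_tally_of_noBacklog [Fintype ι] (hmono : ∀ j, Monotone (A j))
    (hsum : ∀ k, ∑ j, A j k = k) {b T : ℕ} (hb : NoBacklog A p b T) (hbT : b ≤ T)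
    (hgood : ∀ t, b < t → t ≤ T → tally p t (p t) < A (p t) T) (j : ι) :
    A j T - 1 ≤ tally p T j := by
  by_contra! hbehind
  have hahead : A j b ≤ tally p b j :=
    (hb j).resolve_right fun hsafe => by linarith [monotone_tally p j hbT]
  have hlt : ∑ i, (tally p T i - tally p b i) < ∑ i, (A i T - A i b) :=
    sum_lt_sum (fun i _ => tally_sub_le_of_noBacklog hmono hb hbT hgood i)
      ⟨j, mem_univ j, by linarith⟩
  simp only [sum_sub_distrib, sum_tally, hsum] at hlt
  exact lt_irrefl _ hlt

namespace IsEDFSchedule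

theorem tally_le_add_one (h : IsEDFSchedule A p) (hA0 : ∀ j, A j 0 = 0)
    (hmono : ∀ j, Monotone (A j)) (k : ℕ) (j : ι) : tally p k j ≤ A j k + 1 := by
  induction k with
  | zero => simp [hA0]
  | succ k ih =>
    by_cases hj : j = p (k + 1)
    · rw [hj, tally_succ_self]
      linarith [(h k).1]
    · rw [tally_succ_of_ne p hj]
      linarith [hmono j k.le_succ]

theorem noBacklog_succ (h : IsEDFSchedule A p) (hmono : ∀ j, Monotone (A j)) {k T : ℕ}
    (hlate : A (p (k + 1)) T ≤ tally p (k + 1) (p (k + 1))) : NoBacklog A p (k + 1) T := by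
  obtain ⟨-, hmin⟩ := h k
  rw [tally_succ_self] at hlate
  have hsafe : (T : ℕ∞) < deadline A (p (k + 1)) (tally p k (p (k + 1))) :=
    (lt_deadline_iff A).2 fun m hm => (hmono _ hm).trans hlate
  intro j
  have hjk : tally p k j ≤ tally p (k + 1) j := monotone_tally p j k.le_succ
  by_cases helig : tally p k j ≤ A j (k + 1)
  · right
    linarith [(lt_deadline_iff A).1 (hsafe.trans_le (hmin j helig)) T le_rfl]
  · left
    linarith

theorem sub_one_le_tally [Fintype ι] (h : IsEDFSchedule A p) (hA0 : ∀ j, A j 0 = 0)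
    (hmono : ∀ j, Monotone (A j)) (hsum : ∀ k, ∑ j, A j k = k) (T : ℕ) (j : ι) :
    A j T - 1 ≤ tally p T j := by
  classical
  have hb : NoBacklog A p (Nat.findGreatest (NoBacklog A p · T) T) T :=
    Nat.findGreatest_spec (P := (NoBacklog A p · T)) (Nat.zero_le T) (noBacklog_zero hA0 T)
  refine sub_one_le_tally_of_noBacklog hmono hsum hb (Nat.findGreatest_le T)
    (fun t hbt htT => ?_) j
  obtain ⟨k, rfl⟩ : ∃ k, t = k + 1 := ⟨t - 1, by omega⟩
  by_contra! hlate
  exact Nat.findGreatest_is_greatest hbt htT (h.noBacklog_succ hmono hlate)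

theorem abs_sub_tally_le_one [Fintype ι] (h : IsEDFSchedule A p) (hA0 : ∀ j, A j 0 = 0)
    (hmono : ∀ j, Monotone (A j)) (hsum : ∀ k, ∑ j, A j k = k) (k : ℕ) (j : ι) :
    |A j k - tally p k j| ≤ 1 :=
  abs_sub_le_iff.2 ⟨by linarith [h.sub_one_le_tally hA0 hmono hsum k j],
    by linarith [h.tally_le_add_one hA0 hmono k j]⟩

end IsEDFSchedule

variable (A) [Nonempty ι]

def edfTally : ℕ → ι → ℝ
  | 0 => 0
  | k + 1 => edfTally k + Pi.single (Classical.epsilon (IsEDFChoice A (k + 1) (edfTally k))) 1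

def edfPick (i : ℕ) : ι := Classical.epsilon (IsEDFChoice A i (edfTally A (i - 1)))

theorem tally_edfPick (k : ℕ) : tally (edfPick A) k = edfTally A k := by
  induction k with
  | zero => simp [edfTally]
  | succ k ih => rw [tally_succ, ih]; rfl

theorem isEDFSchedule_edfPick [Fintype ι] (hsum : ∀ k, ∑ j, A j k = k) :
    IsEDFSchedule A (edfPick A) := by
  intro k
  have hbehind : ∑ j, tally (edfPick A) k j < ∑ j, A j (k + 1) := by
    rw [sum_tally, hsum]
    push_cast
    linarith
  obtain ⟨j, -, hj⟩ := exists_lt_of_sum_lt hbehind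
  rw [tally_edfPick] at hj ⊢
  exact Classical.epsilon_spec (exists_isEDFChoice A ⟨j, hj.le⟩)

theorem exists_abs_sub_tally_le_one [Fintype ι] (hA0 : ∀ j, A j 0 = 0)
    (hmono : ∀ j, Monotone (A j)) (hsum : ∀ k, ∑ j, A j k = k) :
    ∃ p : ℕ → ι, ∀ k j, |A j k - tally p k j| ≤ 1 :=
  ⟨edfPick A, (isEDFSchedule_edfPick A hsum).abs_sub_tally_le_one hA0 hmono hsum⟩

end EDF

end

theorem monotone_sum_Icc_apply_of_mem_stdSimplex {ι : Type*} [Fintype ι] {u : ℕ → ι → ℝ}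
    (hu : ∀ k, 1 ≤ k → u k ∈ stdSimplex ℝ ι) (j : ι) :
    Monotone fun k => ∑ i ∈ Icc 1 k, u i j :=
  fun _ _ hab => sum_le_sum_of_subset_of_nonneg (Icc_subset_Icc_right hab)
    fun i hi _ => (hu i (mem_Icc.1 hi).1).1 j

theorem sum_sum_Icc_apply_of_mem_stdSimplex {ι : Type*} [Fintype ι] {u : ℕ → ι → ℝ}
    (hu : ∀ k, 1 ≤ k → u k ∈ stdSimplex ℝ ι) (k : ℕ) :
    ∑ j, ∑ i ∈ Icc 1 k, u i j = k := by
  rw [sum_comm, sum_congr rfl fun i hi => (hu i (mem_Icc.1 hi).1).2]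
  simp

theorem euclNorm_le_sqrt_of_abs_le_one {V : ℕ} {x : Fin V → ℝ} (hx : ∀ j, |x j| ≤ 1) :
    euclNorm x ≤ Real.sqrt V :=
  Real.sqrt_le_sqrt <|
    (sum_le_sum fun j _ => (sq_le_one_iff_abs_le_one _).2 (hx j)).trans_eq (by simp)

theorem exists_discrete_sequence_general (V : ℕ)
    (u : ℕ → Fin V → ℝ) (hu : ∀ k, 1 ≤ k → u k ∈ stdSimplex ℝ (Fin V)) :
    ∃ e : ℕ → Fin V → ℝ, (∀ k, 1 ≤ k → e k ∈ stdBasisSet V) ∧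
      (∀ k, 1 ≤ k →
        euclNorm (∑ i ∈ Icc 1 k, (u i - e i)) ≤ Real.sqrt V * (1 + 2 * V)) ∧
      (∀ k, 1 ≤ k → V ∣ k →
        euclNorm (∑ i ∈ Icc 1 k, (u i - e i)) ≤ Real.sqrt V) := by
  have : Nonempty (Fin V) := not_isEmpty_iff.1 fun _ => by simpa using (hu 1 le_rfl).2
  obtain ⟨p, hp⟩ := EDF.exists_abs_sub_tally_le_one (fun j k => ∑ i ∈ Icc 1 k, u i j)
    (fun j => by simp) (monotone_sum_Icc_apply_of_mem_stdSimplex hu)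
    (sum_sum_Icc_apply_of_mem_stdSimplex hu)
  have hnorm (k : ℕ) : euclNorm (∑ i ∈ Icc 1 k, (u i - Pi.single (p i) 1)) ≤ Real.sqrt V :=
    euclNorm_le_sqrt_of_abs_le_one fun j => by simpa [EDF.tally, sum_sub_distrib] using hp k j
  refine ⟨fun i => Pi.single (p i) 1, fun k _ => ⟨p k, rfl⟩, fun k _ => (hnorm k).trans ?_,
    fun k _ _ => hnorm k⟩
  exact le_mul_of_one_le_right (Real.sqrt_nonneg _) (by linarith [V.cast_nonneg (α := ℝ)])

/-- Theorem 2 (Existence of Discrete Sequences): for any sequence of points of the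
simplex `U = stdSimplex ℝ (Fin V)` there is a sequence of standard basis vectors whose
partial sums stay uniformly close in Euclidean norm. -/
theorem exists_discrete_sequence (V : ℕ) (hV : 1 ≤ V)
    (u : ℕ → Fin V → ℝ) (hu : ∀ k, 1 ≤ k → u k ∈ stdSimplex ℝ (Fin V)) :
    ∃ e : ℕ → Fin V → ℝ, (∀ k, 1 ≤ k → e k ∈ stdBasisSet V) ∧
      (∀ k, 1 ≤ k →
        euclNorm (∑ i ∈ Icc 1 k, (u i - e i)) ≤ Real.sqrt V * (1 + 2 * V)) ∧
      (∀ k, 1 ≤ k → V ∣ k →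
        euclNorm (∑ i ∈ Icc 1 k, (u i - e i)) ≤ Real.sqrt V) :=
  exists_discrete_sequence_general V u hu
end

section
/- Let V ≥ 1, let (u_k)_{k≥1} be a sequence of points from U, and let (e_k)_{k≥1} be ANY sequence of points from E. Then for every k ≥ 1: ‖Σ_{i=1}^k (u_i − e_i)‖₂ ≤ γ_k · C, where s_k := Σ_{i=1}^k (u_i − e_i), γ_k := −min_{j∈{1,…,V}} s_k(j), and C := √V · (V − 1). -/
open Finset

theorem sum_eq_one_of_mem_stdBasisSet {V : ℕ} {x : Fin V → ℝ} (hx : x ∈ stdBasisSet V) :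
    ∑ j, x j = 1 := by
  obtain ⟨j, rfl⟩ := hx
  simp

theorem sum_apply_sum_sub_eq_zero {ι κ : Type*} [Fintype ι] {I : Finset κ} {u e : κ → ι → ℝ}
    (h : ∀ i ∈ I, ∑ j, u i j = ∑ j, e i j) :
    ∑ j, (∑ i ∈ I, (u i - e i)) j = 0 := by
  simp only [Finset.sum_apply, Pi.sub_apply]
  rw [Finset.sum_comm]
  exact Finset.sum_eq_zero fun i hi => by rw [Finset.sum_sub_distrib, h i hi, sub_self]

section ZeroSum

variable {ι : Type*} [Fintype ι] {s : ι → ℝ} {m : ℝ}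

theorem le_card_sub_one_mul_neg_of_sum_eq_zero (hsum : ∑ j, s j = 0) (hm : ∀ j, m ≤ s j)
    (j : ι) : s j ≤ (Fintype.card ι - 1) * -m := by
  classical
  have hrest : (Fintype.card ι - 1 : ℝ) * m ≤ ∑ j' ∈ univ.erase j, s j' := by
    have := Finset.card_nsmul_le_sum (univ.erase j) s m fun j' _ => hm j'
    rwa [Finset.card_erase_of_mem (mem_univ j), nsmul_eq_mul, Finset.card_univ,
      Nat.cast_pred (Fintype.card_pos_iff.2 ⟨j⟩)] at this
  rw [← Finset.add_sum_erase _ _ (mem_univ j)] at hsum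
  linarith

theorem abs_le_card_sub_one_mul_neg_of_sum_eq_zero (hsum : ∑ j, s j = 0) (hm : ∀ j, m ≤ s j)
    (j : ι) : |s j| ≤ (Fintype.card ι - 1) * -m := by
  have hm0 : m ≤ 0 := by
    by_contra! hpos
    exact (Finset.sum_pos (fun j _ => hpos.trans_le (hm j)) ⟨j, mem_univ j⟩).ne' hsum
  obtain hcard | hcard : Fintype.card ι = 1 ∨ 2 ≤ Fintype.card ι := by
    have := Fintype.card_pos_iff.2 ⟨j⟩
    omega
  · have : Subsingleton ι := Fintype.card_le_one_iff_subsingleton.1 hcard.le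
    have hj : s j = 0 := by rwa [Fintype.sum_subsingleton _ j] at hsum
    simp [hj, hcard]
  · have h2 : (2 : ℝ) ≤ Fintype.card ι := by exact_mod_cast hcard
    rw [abs_le]
    exact ⟨by nlinarith [hm j], le_card_sub_one_mul_neg_of_sum_eq_zero hsum hm j⟩

end ZeroSum

theorem euclNorm_le_sqrt_mul_of_abs_le {V : ℕ} {x : Fin V → ℝ} {c : ℝ} (hc : 0 ≤ c)
    (hx : ∀ j, |x j| ≤ c) : euclNorm x ≤ Real.sqrt V * c := by
  have hsq : ∑ j, x j ^ 2 ≤ V * c ^ 2 := by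
    calc ∑ j, x j ^ 2 ≤ ∑ _j : Fin V, c ^ 2 :=
          Finset.sum_le_sum fun j _ => sq_le_sq' (abs_le.1 (hx j)).1 (abs_le.1 (hx j)).2
      _ = V * c ^ 2 := by simp
  calc euclNorm x ≤ Real.sqrt (V * c ^ 2) := Real.sqrt_le_sqrt hsq
    _ = Real.sqrt V * c := by rw [Real.sqrt_mul (Nat.cast_nonneg V), Real.sqrt_sq hc]

theorem general_discrete_sequence_bound_general (V : ℕ) (hV : 1 ≤ V)
    (u e : ℕ → Fin V → ℝ)
    (hu : ∀ k, 1 ≤ k → u k ∈ stdSimplex ℝ (Fin V))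
    (heE : ∀ k, 1 ≤ k → e k ∈ stdBasisSet V)
    (k : ℕ) :
    euclNorm (∑ i ∈ Icc 1 k, (u i - e i)) ≤
      (-(Finset.univ.inf' ⟨⟨0, hV⟩, Finset.mem_univ _⟩
          fun j => (∑ i ∈ Icc 1 k, (u i - e i)) j)) *
        (Real.sqrt V * ((V : ℝ) - 1)) := by
  set s : Fin V → ℝ := ∑ i ∈ Icc 1 k, (u i - e i)
  set m : ℝ := Finset.univ.inf' ⟨⟨0, hV⟩, Finset.mem_univ _⟩ fun j => s j
  have hsum : ∑ j, s j = 0 := sum_apply_sum_sub_eq_zero fun i hi => by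
    rw [(hu i (mem_Icc.1 hi).1).2, sum_eq_one_of_mem_stdBasisSet (heE i (mem_Icc.1 hi).1)]
  have hbound (j : Fin V) : |s j| ≤ (V - 1) * -m := by
    simpa using abs_le_card_sub_one_mul_neg_of_sum_eq_zero hsum
      (fun j => Finset.inf'_le _ (mem_univ j)) j
  calc euclNorm s ≤ Real.sqrt V * ((V - 1) * -m) :=
        euclNorm_le_sqrt_mul_of_abs_le ((abs_nonneg _).trans (hbound ⟨0, hV⟩)) hbound
    _ = -m * (Real.sqrt V * (V - 1)) := by ring

/-- Theorem 5: for ANY sequence of discrete actions `e_k ∈ E`,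
`‖∑_{i=1}^k (u_i - e_i)‖₂ ≤ γ_k C` with `γ_k = -min_j s_k(j)` and `C = √V (V-1)`. -/
theorem general_discrete_sequence_bound (V : ℕ) (hV : 1 ≤ V)
    (u e : ℕ → Fin V → ℝ)
    (hu : ∀ k, 1 ≤ k → u k ∈ stdSimplex ℝ (Fin V))
    (heE : ∀ k, 1 ≤ k → e k ∈ stdBasisSet V)
    (k : ℕ) (hk : 1 ≤ k) :
    euclNorm (∑ i ∈ Icc 1 k, (u i - e i)) ≤
      (-(Finset.univ.inf' ⟨⟨0, hV⟩, Finset.mem_univ _⟩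
          fun j => (∑ i ∈ Icc 1 k, (u i - e i)) j)) *
        (Real.sqrt V * ((V : ℝ) - 1)) :=
  general_discrete_sequence_bound_general V hV u e hu heE k
end

section
/- Let δ, δ_k ∈ ℝ^m, let θ, λ_k ∈ ℝ^m with θ ⪰ 0 and λ_k ⪰ 0, let α > 0, let x_k ∈ X, and set λ_{k+1} := [λ_k + α(g(x_k) + δ_k)]⁺. Then ‖λ_{k+1} − θ‖₂² ≤ ‖λ_k − θ‖₂² + α²‖g(x_k) + δ‖₂² + α²‖δ_k − δ‖₂² + 2α²(δ_k − δ)ᵀ(g(x_k) + δ) + 2α(λ_k − θ)ᵀ(δ_k − δ) + 2α( L(x_k, λ_k, δ) − h(θ, δ) ). -/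
open Finset

/-- Componentwise projection onto the nonnegative orthant, `[v]⁺`. -/
noncomputable def posPart {m : ℕ} (v : EuclideanSpace ℝ (Fin m)) : EuclideanSpace ℝ (Fin m) :=
  WithLp.toLp 2 (fun j => max (v j) 0)

/-- The Lagrangian `L(x, λ, δ) = f(x) + λᵀ (g(x) + δ)`. -/
noncomputable def lagr {n m : ℕ} (f : EuclideanSpace ℝ (Fin n) → ℝ)
    (g : EuclideanSpace ℝ (Fin n) → EuclideanSpace ℝ (Fin m))
    (x : EuclideanSpace ℝ (Fin n)) (lam δ : EuclideanSpace ℝ (Fin m)) : ℝ :=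
  f x + ∑ j, lam j * (g x j + δ j)

/-- The Lagrange dual function `h(λ, δ) = min_{x ∈ X} L(x, λ, δ)`. -/
noncomputable def dualFn {n m : ℕ} (X : Set (EuclideanSpace ℝ (Fin n)))
    (f : EuclideanSpace ℝ (Fin n) → ℝ)
    (g : EuclideanSpace ℝ (Fin n) → EuclideanSpace ℝ (Fin m))
    (lam δ : EuclideanSpace ℝ (Fin m)) : ℝ :=
  sInf ((fun x => lagr f g x lam δ) '' X)
/-!
Write `λₖ + α (g(xₖ) + δₖ) - θ = (λₖ - θ) + α ((g(xₖ) + δ) + (δₖ - δ))`. Projecting onto the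
nonnegative orthant does not increase the distance to `θ ⪰ 0`, and expanding the square of the
right-hand side gives every term of the bound except `2α ⟪λₖ - θ, g(xₖ) + δ⟫`, which equals
`2α (L(xₖ, λₖ, δ) - L(xₖ, θ, δ)) ≤ 2α (L(xₖ, λₖ, δ) - h(θ, δ))` because `xₖ ∈ X`.
-/

open scoped RealInnerProductSpace

lemma EuclideanSpace.real_inner_eq_sum {ι : Type*} [Fintype ι] (x y : EuclideanSpace ℝ ι) :
    ⟪x, y⟫ = ∑ j, x j * y j := by
  simp [EuclideanSpace.inner_eq_star_dotProduct, dotProduct, mul_comm]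

lemma norm_add_smul_add_sq {E : Type*} [NormedAddCommGroup E] [InnerProductSpace ℝ E]
    (a b c : E) (α : ℝ) :
    ‖a + α • (b + c)‖ ^ 2 = ‖a‖ ^ 2 + α ^ 2 * ‖b‖ ^ 2 + α ^ 2 * ‖c‖ ^ 2
      + 2 * α ^ 2 * ⟪c, b⟫ + 2 * α * ⟪a, c⟫ + 2 * α * ⟪a, b⟫ := by
  rw [norm_add_sq_real, norm_smul, mul_pow, inner_smul_right, norm_add_sq_real, inner_add_right,
    Real.norm_eq_abs, sq_abs, real_inner_comm b c]
  ring

lemma norm_posPart_sub_le {m : ℕ} (v θ : EuclideanSpace ℝ (Fin m)) (hθ : ∀ j, 0 ≤ θ j) :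
    ‖posPart v - θ‖ ≤ ‖v - θ‖ := by
  rw [← sq_le_sq₀ (norm_nonneg _) (norm_nonneg _), EuclideanSpace.real_norm_sq_eq,
    EuclideanSpace.real_norm_sq_eq]
  refine Finset.sum_le_sum fun j _ => sq_le_sq.2 ?_
  simpa [_root_.posPart, max_eq_left (hθ j)] using abs_max_sub_max_le_abs (v j) (θ j) 0

section Lagrangian

variable {n m : ℕ} {f : EuclideanSpace ℝ (Fin n) → ℝ}
  {g : EuclideanSpace ℝ (Fin n) → EuclideanSpace ℝ (Fin m)}

lemma lagr_eq_add_inner (x : EuclideanSpace ℝ (Fin n)) (lam δ : EuclideanSpace ℝ (Fin m)) :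
    lagr f g x lam δ = f x + ⟪lam, g x + δ⟫ := by
  simp [lagr, EuclideanSpace.real_inner_eq_sum]

lemma continuous_lagr (hf : Continuous f) (hg : Continuous g) (lam δ : EuclideanSpace ℝ (Fin m)) :
    Continuous fun x => lagr f g x lam δ := by
  simp only [lagr_eq_add_inner]
  fun_prop

/-- Compactness is what keeps `dualFn`, an `sInf`, away from the junk value of an unbounded set. -/
lemma dualFn_le_lagr {X : Set (EuclideanSpace ℝ (Fin n))} (hX : IsCompact X)
    (hf : Continuous f) (hg : Continuous g) (lam δ : EuclideanSpace ℝ (Fin m))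
    {x : EuclideanSpace ℝ (Fin n)} (hx : x ∈ X) :
    dualFn X f g lam δ ≤ lagr f g x lam δ :=
  csInf_le (hX.image (continuous_lagr hf hg lam δ)).bddBelow ⟨x, hx, rfl⟩

end Lagrangian

theorem one_step_expansion_general {n m : ℕ}
    (X : Set (EuclideanSpace ℝ (Fin n))) (hXcomp : IsCompact X)
    (f : EuclideanSpace ℝ (Fin n) → ℝ) (hfc : Continuous f)
    (g : EuclideanSpace ℝ (Fin n) → EuclideanSpace ℝ (Fin m))
    (hgc : Continuous g)
    (δ δk θ lamk : EuclideanSpace ℝ (Fin m))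
    (hθ : ∀ j, 0 ≤ θ j)
    (α : ℝ) (hα : 0 < α)
    (xk : EuclideanSpace ℝ (Fin n)) (hxk : xk ∈ X) :
    ‖posPart (lamk + α • (g xk + δk)) - θ‖ ^ 2 ≤
      ‖lamk - θ‖ ^ 2 + α ^ 2 * ‖g xk + δ‖ ^ 2 + α ^ 2 * ‖δk - δ‖ ^ 2
        + 2 * α ^ 2 * ∑ j, (δk j - δ j) * (g xk j + δ j)
        + 2 * α * ∑ j, (lamk j - θ j) * (δk j - δ j)
        + 2 * α * (lagr f g xk lamk δ - dualFn X f g θ δ) := by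
  have hsplit : lamk + α • (g xk + δk) - θ = (lamk - θ) + α • ((g xk + δ) + (δk - δ)) := by
    module
  have hcross : ⟪δk - δ, g xk + δ⟫ = ∑ j, (δk j - δ j) * (g xk j + δ j) := by
    simp [EuclideanSpace.real_inner_eq_sum]
  have hshift : ⟪lamk - θ, δk - δ⟫ = ∑ j, (lamk j - θ j) * (δk j - δ j) := by
    simp [EuclideanSpace.real_inner_eq_sum]
  have hdual : ⟪lamk - θ, g xk + δ⟫ ≤ lagr f g xk lamk δ - dualFn X f g θ δ := by
    have := dualFn_le_lagr hXcomp hfc hgc θ δ hxk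
    rw [lagr_eq_add_inner] at this ⊢
    rw [inner_sub_left]
    linarith
  calc ‖posPart (lamk + α • (g xk + δk)) - θ‖ ^ 2
      ≤ ‖lamk + α • (g xk + δk) - θ‖ ^ 2 := by gcongr; exact norm_posPart_sub_le _ _ hθ
    _ = ‖lamk - θ‖ ^ 2 + α ^ 2 * ‖g xk + δ‖ ^ 2 + α ^ 2 * ‖δk - δ‖ ^ 2
        + 2 * α ^ 2 * ⟪δk - δ, g xk + δ⟫ + 2 * α * ⟪lamk - θ, δk - δ⟫
        + 2 * α * ⟪lamk - θ, g xk + δ⟫ := by rw [hsplit, norm_add_smul_add_sq]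
    _ ≤ _ := by rw [hcross, hshift]; gcongr

/-- The basic one-step expansion of the perturbed dual subgradient update. -/
theorem one_step_expansion {n m : ℕ}
    (X : Set (EuclideanSpace ℝ (Fin n))) (hXne : X.Nonempty) (hXcomp : IsCompact X)
    (hXconv : Convex ℝ X)
    (f : EuclideanSpace ℝ (Fin n) → ℝ) (hf : ConvexOn ℝ Set.univ f) (hfc : Continuous f)
    (g : EuclideanSpace ℝ (Fin n) → EuclideanSpace ℝ (Fin m))
    (hg : ∀ j, ConvexOn ℝ Set.univ fun x => g x j) (hgc : Continuous g)
    (δ δk θ lamk : EuclideanSpace ℝ (Fin m))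
    (hθ : ∀ j, 0 ≤ θ j) (hlamk : ∀ j, 0 ≤ lamk j)
    (α : ℝ) (hα : 0 < α)
    (xk : EuclideanSpace ℝ (Fin n)) (hxk : xk ∈ X) :
    ‖posPart (lamk + α • (g xk + δk)) - θ‖ ^ 2 ≤
      ‖lamk - θ‖ ^ 2 + α ^ 2 * ‖g xk + δ‖ ^ 2 + α ^ 2 * ‖δk - δ‖ ^ 2
        + 2 * α ^ 2 * ∑ j, (δk j - δ j) * (g xk j + δ j)
        + 2 * α * ∑ j, (lamk j - θ j) * (δk j - δ j)
        + 2 * α * (lagr f g xk lamk δ - dualFn X f g θ δ) :=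
  one_step_expansion_general X hXcomp f hfc g hgc δ δk θ lamk hθ α hα xk hxk
end

section
/- Let α > 0, let λ₁ ∈ ℝ^m with λ₁ ⪰ 0, let (δ_k)_{k≥1} be a sequence in ℝ^m, let (x_k)_{k≥1} be any sequence of points from X, and define λ_{k+1} := [λ_k + α(g(x_k) + δ_k)]⁺ for k = 1, 2, …. Then for every k ≥ 1, the running average x̄_k := (1/k) Σ_{i=1}^k x_i satisfies the componentwise inequality g(x̄_k) + (1/k) Σ_{i=1}^k δ_i ⪯ λ_{k+1}/(αk). -/
open Finset

/-!
Since `[v]⁺ ⪰ v`, unrolling the recursion gives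
`λ_{k+1} ⪰ λ₁ + α ∑_{i ≤ k} (g(x_i) + δ_i) ⪰ α ∑_{i ≤ k} (g(x_i) + δ_i)`.
Dividing by `αk` and applying Jensen's inequality to each convex `g_j` at the
average `x̄_k` gives the bound.
-/

lemma apply_le_posPart_apply {m : ℕ} (v : EuclideanSpace ℝ (Fin m)) (j : Fin m) :
    v j ≤ posPart v j :=
  le_max_left _ _

lemma add_sum_Icc_le_of_add_le_succ {β : Type*} [AddCommMonoid β] [PartialOrder β]
    [IsOrderedAddMonoid β] {u c : ℕ → β} (h : ∀ i, 1 ≤ i → u i + c i ≤ u (i + 1)) (k : ℕ) :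
    u 1 + ∑ i ∈ Icc 1 k, c i ≤ u (k + 1) := by
  induction k with
  | zero => simp
  | succ k ih =>
    rw [sum_Icc_succ_top (by omega), ← add_assoc]
    exact (add_le_add_left ih _).trans (h (k + 1) (by omega))

lemma ConvexOn.map_finset_average_le {𝕜 E β ι : Type*} [Field 𝕜] [LinearOrder 𝕜]
    [IsStrictOrderedRing 𝕜] [AddCommGroup E] [AddCommGroup β] [PartialOrder β]
    [IsOrderedAddMonoid β] [Module 𝕜 E] [Module 𝕜 β] [IsStrictOrderedModule 𝕜 β]
    {s : Set E} {f : E → β} (hf : ConvexOn 𝕜 s f) {t : Finset ι} (ht : t.Nonempty)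
    {p : ι → E} (hmem : ∀ i ∈ t, p i ∈ s) :
    f ((#t : 𝕜)⁻¹ • ∑ i ∈ t, p i) ≤ (#t : 𝕜)⁻¹ • ∑ i ∈ t, f (p i) := by
  have hcard : (#t : 𝕜) ≠ 0 := by exact_mod_cast ht.card_pos.ne'
  simpa only [smul_sum] using
    hf.map_sum_le (w := fun _ => (#t : 𝕜)⁻¹) (fun _ _ => by positivity)
      (by rw [sum_const, nsmul_eq_mul, mul_inv_cancel₀ hcard]) hmem

theorem averaged_constraint_bound_general {n m : ℕ}
    (g : EuclideanSpace ℝ (Fin n) → EuclideanSpace ℝ (Fin m))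
    (hg : ∀ j, ConvexOn ℝ Set.univ fun x => g x j)
    (α : ℝ) (hα : 0 < α)
    (δseq : ℕ → EuclideanSpace ℝ (Fin m))
    (lam : ℕ → EuclideanSpace ℝ (Fin m)) (x : ℕ → EuclideanSpace ℝ (Fin n))
    (hlam1 : ∀ j, 0 ≤ lam 1 j)
    (hrec : ∀ k, 1 ≤ k → lam (k + 1) = posPart (lam k + α • (g (x k) + δseq k)))
    (k : ℕ) (hk : 1 ≤ k) :
    ∀ j, g ((1 / (k : ℝ)) • ∑ i ∈ Icc 1 k, x i) j
        + (1 / (k : ℝ)) * ∑ i ∈ Icc 1 k, δseq i j ≤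
      lam (k + 1) j / (α * k) := by
  intro j
  have hcard : (#(Icc 1 k) : ℝ) = k := by simp
  have hjensen : g ((1 / (k : ℝ)) • ∑ i ∈ Icc 1 k, x i) j
      ≤ (1 / (k : ℝ)) * ∑ i ∈ Icc 1 k, g (x i) j := by
    simpa only [hcard, one_div, smul_eq_mul] using
      (hg j).map_finset_average_le (nonempty_Icc.2 hk) fun i _ => Set.mem_univ (x i)
  have htelescope : lam 1 j + ∑ i ∈ Icc 1 k, α * (g (x i) j + δseq i j) ≤ lam (k + 1) j :=
    add_sum_Icc_le_of_add_le_succ (u := fun i => lam i j) (fun i hi => by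
      simpa only [hrec i hi, PiLp.add_apply, PiLp.smul_apply, smul_eq_mul] using
        apply_le_posPart_apply (lam i + α • (g (x i) + δseq i)) j) k
  rw [← mul_sum, sum_add_distrib] at htelescope
  calc g ((1 / (k : ℝ)) • ∑ i ∈ Icc 1 k, x i) j + (1 / (k : ℝ)) * ∑ i ∈ Icc 1 k, δseq i j
      ≤ (1 / (k : ℝ)) * (∑ i ∈ Icc 1 k, g (x i) j + ∑ i ∈ Icc 1 k, δseq i j) := by
        rw [mul_add]; linarith
    _ ≤ (1 / (k : ℝ)) * (lam (k + 1) j / α) := by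
        gcongr
        rw [le_div_iff₀' hα]
        linarith [hlam1 j]
    _ = lam (k + 1) j / (α * k) := by field_simp

/-- The running average of the primal iterates approximately satisfies the constraints:
`g(x̄_k) + (1/k) ∑_{i=1}^k δ_i ⪯ λ_{k+1} / (αk)` componentwise. -/
theorem averaged_constraint_bound {n m : ℕ}
    (X : Set (EuclideanSpace ℝ (Fin n))) (hXne : X.Nonempty) (hXcomp : IsCompact X)
    (hXconv : Convex ℝ X)
    (g : EuclideanSpace ℝ (Fin n) → EuclideanSpace ℝ (Fin m))
    (hg : ∀ j, ConvexOn ℝ Set.univ fun x => g x j) (hgc : Continuous g)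
    (α : ℝ) (hα : 0 < α)
    (δseq : ℕ → EuclideanSpace ℝ (Fin m))
    (lam : ℕ → EuclideanSpace ℝ (Fin m)) (x : ℕ → EuclideanSpace ℝ (Fin n))
    (hlam1 : ∀ j, 0 ≤ lam 1 j)
    (hxX : ∀ k, 1 ≤ k → x k ∈ X)
    (hrec : ∀ k, 1 ≤ k → lam (k + 1) = posPart (lam k + α • (g (x k) + δseq k)))
    (k : ℕ) (hk : 1 ≤ k) :
    ∀ j, g ((1 / (k : ℝ)) • ∑ i ∈ Icc 1 k, x i) j
        + (1 / (k : ℝ)) * ∑ i ∈ Icc 1 k, δseq i j ≤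
      lam (k + 1) j / (α * k) :=
  averaged_constraint_bound_general g hg α hα δseq lam x hlam1 hrec k hk
end
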